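/- arXiv:1611.01955 — 2 statements merged into one kernel-verified Lean document; each statement's English description precedes it below -/
import Mathlib

section
/- On the Legendre elliptic curve E_6 over the complex numbers, given by the affine equation y² = x(x−1)(x−6), any point P = (2, y₀) with y₀² = −8 has infinite order in the group of points: for every nonzero integer n, the multiple n•P is not the point at infinity. -/
/-!
Doubling on the Legendre curve `y² = x(x-1)(x-t)` sends `x` to `(x² - t)² / (4x(x-1)(x-t))`.
If `x` is rational with negative `2`-adic valuation `v` and `t` is a `2`-adic integer, the
numerator has valuation `4v` and the denominator `2 + 3v`, so the doubled point has valuation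
`v - 2`. For `P = (2, y₀)` on `E₆` the point `2P` has `x = -1/8`, so `2^(m+1) P` has an
x-coordinate of valuation `-3 - 2m`. These points are therefore pairwise distinct, which is
impossible if `P` has finite order.
-/

open WeierstrassCurve

/-- The Legendre elliptic curve `E₆ : y² = x(x−1)(x−6) = x³ − 7x² + 6x` over `ℂ`. -/
noncomputable def E6 : WeierstrassCurve.Affine ℂ :=
  { a₁ := 0, a₂ := -7, a₃ := 0, a₄ := 6, a₆ := 0 }

open WeierstrassCurve.Affine Function

namespace padicValRat

variable {p : ℕ} {q r : ℚ}

lemma ne_zero_of_neg (hq : padicValRat p q < 0) : q ≠ 0 := by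
  rintro rfl; simp at hq

variable [Fact p.Prime]

lemma add_eq_of_neg_of_nonneg (hq : padicValRat p q < 0) (hr : 0 ≤ padicValRat p r) :
    padicValRat p (q + r) = padicValRat p q := by
  rcases eq_or_ne r 0 with rfl | hr₀
  · rw [add_zero]
  refine add_eq_of_lt (fun hqr => ?_) (ne_zero_of_neg hq) hr₀ (by omega)
  rw [eq_neg_of_add_eq_zero_left hqr, padicValRat.neg] at hq
  omega

lemma sub_eq_of_neg_of_nonneg (hq : padicValRat p q < 0) (hr : 0 ≤ padicValRat p r) :
    padicValRat p (q - r) = padicValRat p q := by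
  rw [sub_eq_add_neg, add_eq_of_neg_of_nonneg hq (by rwa [padicValRat.neg])]

end padicValRat

/-- The x-coordinate of `2 • (x, y)` on the Legendre curve `y² = x(x-1)(x-t)`. -/
def legendreDoubleX {K : Type*} [Field K] (t x : K) : K :=
  (x ^ 2 - t) ^ 2 / (4 * (x * (x - 1) * (x - t)))

lemma padicValRat_legendreDoubleX {t q : ℚ} (ht : 0 ≤ padicValRat 2 t)
    (hq : padicValRat 2 q < 0) :
    padicValRat 2 (legendreDoubleX t q) = padicValRat 2 q - 2 := by
  have hq1 : padicValRat 2 (q - 1) = padicValRat 2 q :=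
    padicValRat.sub_eq_of_neg_of_nonneg hq (by simp)
  have hqt : padicValRat 2 (q - t) = padicValRat 2 q :=
    padicValRat.sub_eq_of_neg_of_nonneg hq ht
  have hsqt : padicValRat 2 (q ^ 2 - t) = 2 * padicValRat 2 q := by
    rw [padicValRat.sub_eq_of_neg_of_nonneg (by simp; omega) ht]; simp
  have h4 : padicValRat 2 4 = 2 := by
    rw [show (4 : ℚ) = ((2 : ℕ) : ℚ) ^ 2 by norm_num, padicValRat.pow, padicValRat.self one_lt_two]
    norm_num
  have hq0 := padicValRat.ne_zero_of_neg hq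
  have hq10 := padicValRat.ne_zero_of_neg (hq1 ▸ hq)
  have hqt0 := padicValRat.ne_zero_of_neg (hqt ▸ hq)
  have hsqt0 := padicValRat.ne_zero_of_neg (p := 2) (q := q ^ 2 - t) (by omega)
  rw [legendreDoubleX, padicValRat.div (by positivity) (by positivity),
    padicValRat.mul (by norm_num) (by positivity), padicValRat.mul (by positivity) hqt0,
    padicValRat.mul hq0 hq10, padicValRat.pow, hsqt, hq1, hqt, h4]
  push_cast; ring

lemma WeierstrassCurve.Affine.addX_slope_self_mul_sq {F : Type*} [Field F] [DecidableEq F]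
    {W : Affine F} {x y : F} (h : W.Equation x y) (hy : y ≠ W.negY x y) :
    W.addX x x (W.slope x x y y) * (y - W.negY x y) ^ 2 =
      x ^ 4 - W.b₄ * x ^ 2 - 2 * W.b₆ * x - W.b₈ := by
  have hy' : y - W.negY x y ≠ 0 := sub_ne_zero.mpr hy
  rw [slope_of_Y_ne rfl hy, addX]
  field_simp
  rw [equation_iff] at h
  simp only [negY, b₄, b₆, b₈]
  linear_combination -(8 * x + 4 * W.a₂ + W.a₁ ^ 2) * h

lemma E6_equation_iff (x y : ℂ) : E6.Equation x y ↔ y ^ 2 = x * (x - 1) * (x - 6) := by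
  rw [equation_iff, E6]; constructor <;> intro h <;> linear_combination h

lemma E6_two_nsmul_some {x y : ℂ} (h : E6.Nonsingular x y) (hx : x * (x - 1) * (x - 6) ≠ 0) :
    ∃ (x' y' : ℂ) (h' : E6.Nonsingular x' y'),
      2 • Point.some _ _ h = Point.some _ _ h' ∧ x' = legendreDoubleX 6 x := by
  have hy2 : y ^ 2 = x * (x - 1) * (x - 6) := (E6_equation_iff x y).mp h.1
  have hnegY : E6.negY x y = -y := by simp [negY, E6]
  have hy : y ≠ E6.negY x y := by
    rw [hnegY]; intro hy; apply hx; rw [← hy2]; linear_combination y / 2 * hy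
  refine ⟨_, _, _, (two_nsmul _).trans (Point.add_self_of_Y_ne hy), ?_⟩
  have hdbl := addX_slope_self_mul_sq h.1 hy
  rw [hnegY, sub_neg_eq_add, ← two_mul, mul_pow, hy2] at hdbl
  rw [legendreDoubleX, eq_div_iff (by simpa using hx)]
  simp only [b₄, b₆, b₈, E6] at hdbl ⊢
  linear_combination hdbl

def HasTwoAdicX (v : ℤ) (Q : E6.Point) : Prop :=
  ∃ (x y : ℂ) (h : E6.Nonsingular x y) (q : ℚ),
    Q = Point.some _ _ h ∧ x = q ∧ padicValRat 2 q = v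

lemma HasTwoAdicX.unique {v w : ℤ} {Q : E6.Point} (hv : HasTwoAdicX v Q)
    (hw : HasTwoAdicX w Q) : v = w := by
  obtain ⟨x, y, h, q, rfl, rfl, rfl⟩ := hv
  obtain ⟨x', y', h', q', hQ, hx, rfl⟩ := hw
  obtain ⟨hq, -⟩ := Point.some.inj hQ
  rw [Rat.cast_injective (hq.trans hx)]

lemma HasTwoAdicX.two_nsmul {v : ℤ} {Q : E6.Point} (hQ : HasTwoAdicX v Q) (hv : v < 0) :
    HasTwoAdicX (v - 2) (2 • Q) := by
  obtain ⟨x, y, h, q, rfl, rfl, rfl⟩ := hQ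
  have h6 : 0 ≤ padicValRat 2 6 := by
    rw [show (6 : ℚ) = (6 : ℕ) by norm_num, padicValRat.of_nat]; positivity
  have hsub {r : ℚ} (hr : 0 ≤ padicValRat 2 r) : q - r ≠ 0 :=
    padicValRat.ne_zero_of_neg (padicValRat.sub_eq_of_neg_of_nonneg hv hr ▸ hv)
  have hq : q * (q - 1) * (q - 6) ≠ 0 :=
    mul_ne_zero (mul_ne_zero (padicValRat.ne_zero_of_neg hv) (hsub (by simp))) (hsub h6)
  obtain ⟨x', y', h', hdbl, rfl⟩ := E6_two_nsmul_some h (by exact_mod_cast hq)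
  exact ⟨_, _, h', legendreDoubleX 6 q, hdbl, by simp [legendreDoubleX],
    padicValRat_legendreDoubleX h6 hv⟩

lemma hasTwoAdicX_two_nsmul_some {y₀ : ℂ} (h : E6.Nonsingular 2 y₀) :
    HasTwoAdicX (-3) (2 • Point.some _ _ h) := by
  obtain ⟨x', y', h', hdbl, rfl⟩ := E6_two_nsmul_some h (by norm_num)
  refine ⟨_, _, h', -1 / 8, hdbl, by norm_num [legendreDoubleX], ?_⟩
  rw [show (-1 / 8 : ℚ) = -((2 : ℕ) ^ 3 : ℚ)⁻¹ by norm_num, padicValRat.neg,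
    padicValRat.self_pow_inv]
  rfl

lemma not_isOfFinAddOrder_of_injective_comp_nsmul {G : Type*} [AddMonoid G] {x : G}
    (f : ℕ → ℕ) (hf : Injective fun m => f m • x) : ¬IsOfFinAddOrder x := fun hx =>
  Set.infinite_range_of_injective hf <| hx.finite_multiples.subset <|
    Set.range_subset_iff.mpr fun m => ⟨f m, rfl⟩

theorem E6_point_infinite_order_general (y₀ : ℂ)
    (h : E6.Nonsingular 2 y₀) (n : ℤ) (hn : n ≠ 0) :
    n • (WeierstrassCurve.Affine.Point.some _ _ h) ≠ (0 : E6.Point) := by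
  have hval (m : ℕ) : HasTwoAdicX (-3 - 2 * m) (2 ^ (m + 1) • Point.some _ _ h) := by
    induction m with
    | zero => simpa using hasTwoAdicX_two_nsmul_some h
    | succ m ih =>
      rw [pow_succ', mul_smul]
      convert ih.two_nsmul (by omega) using 1
      push_cast; ring
  have hinj : Injective fun m : ℕ => 2 ^ (m + 1) • Point.some _ _ h := fun i j hij => by
    simp only at hij
    have := (hval i).unique (hij ▸ hval j)
    omega
  exact fun hzero => not_isOfFinAddOrder_of_injective_comp_nsmul _ hinj
    (isOfFinAddOrder_iff_zsmul_eq_zero.mpr ⟨n, hn, hzero⟩)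

/-- On the Legendre curve `E₆ : y² = x(x−1)(x−6)` over `ℂ`, any point
`P = (2, y₀)` with `y₀² = −8` has infinite order: for every nonzero integer `n`,
the multiple `n • P` is not the point at infinity. -/
theorem E6_point_infinite_order (y₀ : ℂ) (hy : y₀ ^ 2 = -8)
    (h : E6.Nonsingular 2 y₀) (n : ℤ) (hn : n ≠ 0) :
    n • (WeierstrassCurve.Affine.Point.some _ _ h) ≠ (0 : E6.Point) :=
  E6_point_infinite_order_general y₀ h n hn
end

section
/- The modular lambda function λ(τ) = (e₂(τ) − e₁(τ))/(e₃(τ) − e₁(τ)) is invariant under the principal congruence subgroup Γ(2) of SL₂(ℤ): for every matrix (a b; c d) ∈ SL₂(ℤ) with a and d odd and b and c even, and every τ in the complex upper half-plane ℍ, one has λ((aτ + b)/(cτ + d)) = λ(τ). -/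
noncomputable section

/-- `z` belongs to the lattice `Λ_τ = ℤ + τℤ`. -/
def IsLatticePt (τ z : ℂ) : Prop := ∃ m n : ℤ, z = (m : ℂ) + (n : ℂ) * τ

/-- The Weierstrass `℘`-function of the lattice `Λ_τ = ℤ + τℤ`:
`℘(z;τ) = 1/z² + Σ_{ω ∈ Λ_τ∖{0}} (1/(z−ω)² − 1/ω²)`. -/
def wp (τ z : ℂ) : ℂ :=
  1 / z ^ 2 + ∑' p : ℤ × ℤ, if p = 0 then 0 else
    (1 / (z - ((p.1 : ℂ) + (p.2 : ℂ) * τ)) ^ 2 - 1 / ((p.1 : ℂ) + (p.2 : ℂ) * τ) ^ 2)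

/-- The derivative `℘′(z;τ)` of the Weierstrass `℘`-function with respect to `z`. -/
def wp' (τ z : ℂ) : ℂ := deriv (wp τ) z

/-- The invariant `g₂(τ) = 60 Σ_{ω ∈ Λ_τ∖{0}} ω⁻⁴`. -/
def g2 (τ : ℂ) : ℂ :=
  60 * ∑' p : ℤ × ℤ, if p = 0 then 0 else (((p.1 : ℂ) + (p.2 : ℂ) * τ) ^ 4)⁻¹

/-- The invariant `g₃(τ) = 140 Σ_{ω ∈ Λ_τ∖{0}} ω⁻⁶`. -/
def g3 (τ : ℂ) : ℂ :=
  140 * ∑' p : ℤ × ℤ, if p = 0 then 0 else (((p.1 : ℂ) + (p.2 : ℂ) * τ) ^ 6)⁻¹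

/-- The half-period value `e₁(τ) = ℘(1/2;τ)`. -/
def e1 (τ : ℂ) : ℂ := wp τ (1 / 2)

/-- The half-period value `e₂(τ) = ℘((1+τ)/2;τ)`. -/
def e2 (τ : ℂ) : ℂ := wp τ ((1 + τ) / 2)

/-- The half-period value `e₃(τ) = ℘(τ/2;τ)`. -/
def e3 (τ : ℂ) : ℂ := wp τ (τ / 2)

/-- The modular lambda function `λ(τ) = (e₂(τ) − e₁(τ))/(e₃(τ) − e₁(τ))`. -/
def mlambda (τ : ℂ) : ℂ := (e2 τ - e1 τ) / (e3 τ - e1 τ)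

end

/-! The `℘`-function depends only on the lattice, so it is Mathlib's `PeriodPair.weierstrassP` for
the pair `(1, τ)` and is `Λ_τ`-periodic. Since `Λ_τ = (cτ + d) Λ_τ'` for `τ' = (aτ + b)/(cτ + d)`,
`℘(z; τ') = (cτ + d)² ℘((cτ + d) z; τ)`. For a matrix in `Γ(2)`, `(cτ + d)` times a half-period
of `Λ_τ'` is congruent modulo `Λ_τ` to the corresponding half-period of `Λ_τ`, so every `eᵢ`
picks up the same factor `(cτ + d)²`, which cancels in `λ`. -/

open PeriodPair

def PeriodPair.ofTau (τ : ℂ) (hτ : τ.im ≠ 0) : PeriodPair where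
  ω₁ := 1
  ω₂ := τ
  indep := by
    refine (LinearIndependent.pair_iff' one_ne_zero).mpr fun r h => hτ ?_
    simpa using congrArg Complex.im h.symm

lemma PeriodPair.hasSum_weierstrassP_prod (L : PeriodPair) (z : ℂ) :
    HasSum (fun p : ℤ × ℤ => 1 / (z - (p.1 * L.ω₁ + p.2 * L.ω₂)) ^ 2 -
      1 / (p.1 * L.ω₁ + p.2 * L.ω₂) ^ 2) (℘[L] z) := by
  have h := L.hasSum_weierstrassP z
  rw [← L.latticeEquivProd.symm.toEquiv.hasSum_iff] at h
  simpa [Function.comp_def, latticeEquiv_symm_apply] using h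

lemma hasSum_weierstrassP_ofTau {τ : ℂ} (hτ : τ.im ≠ 0) (z : ℂ) :
    HasSum (fun p : ℤ × ℤ => 1 / (z - (p.1 + p.2 * τ)) ^ 2 - 1 / (p.1 + p.2 * τ) ^ 2)
      (℘[ofTau τ hτ] z) := by
  simpa [ofTau] using (ofTau τ hτ).hasSum_weierstrassP_prod z

lemma wp_eq_weierstrassP {τ : ℂ} (hτ : τ.im ≠ 0) (z : ℂ) : wp τ z = ℘[ofTau τ hτ] z := by
  rw [← (hasSum_weierstrassP_ofTau hτ z).tsum_eq,
    (hasSum_weierstrassP_ofTau hτ z).summable.tsum_eq_add_tsum_ite 0, wp]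
  simp

lemma hasSum_wp {τ : ℂ} (hτ : τ.im ≠ 0) (z : ℂ) :
    HasSum (fun p : ℤ × ℤ => 1 / (z - (p.1 + p.2 * τ)) ^ 2 - 1 / (p.1 + p.2 * τ) ^ 2)
      (wp τ z) :=
  wp_eq_weierstrassP hτ z ▸ hasSum_weierstrassP_ofTau hτ z

lemma wp_add_of_isLatticePt {τ w : ℂ} (hτ : τ.im ≠ 0) (hw : IsLatticePt τ w) (z : ℂ) :
    wp τ (z + w) = wp τ z := by
  obtain ⟨m, n, rfl⟩ := hw
  have hmem : (m : ℂ) + n * τ ∈ (ofTau τ hτ).lattice :=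
    mem_lattice.mpr ⟨m, n, by simp [ofTau]⟩
  simpa [wp_eq_weierstrassP hτ] using (ofTau τ hτ).weierstrassP_add_coe z ⟨_, hmem⟩

lemma wp_half_eq_of_modEq {τ : ℂ} (hτ : τ.im ≠ 0) {m n m' n' : ℤ} (hm : m ≡ m' [ZMOD 2])
    (hn : n ≡ n' [ZMOD 2]) : wp τ ((m + n * τ) / 2) = wp τ ((m' + n' * τ) / 2) := by
  obtain ⟨k, hk⟩ := hm.dvd
  obtain ⟨l, hl⟩ := hn.dvd
  have hk' : (m' : ℂ) - m = 2 * k := by exact_mod_cast hk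
  have hl' : (n' : ℂ) - n = 2 * l := by exact_mod_cast hl
  have hlat : IsLatticePt τ ((m' + n' * τ) / 2 - (m + n * τ) / 2) :=
    ⟨k, l, by linear_combination (hk' + τ * hl') / 2⟩
  rw [← wp_add_of_isLatticePt hτ hlat, add_sub_cancel]

/-- Carries the coordinates of `ω ∈ Λ_τ'`, `τ' = (aτ + b)/(cτ + d)`, to those of
`(cτ + d) ω ∈ Λ_τ`. -/
def prodEquivOfDetEqOne {a b c d : ℤ} (hdet : a * d - b * c = 1) : ℤ × ℤ ≃ ℤ × ℤ where
  toFun p := (d * p.1 + b * p.2, c * p.1 + a * p.2)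
  invFun q := (a * q.1 - b * q.2, -c * q.1 + d * q.2)
  left_inv p := by
    ext
    · dsimp only; linear_combination p.1 * hdet
    · dsimp only; linear_combination p.2 * hdet
  right_inv q := by
    ext
    · dsimp only; linear_combination q.1 * hdet
    · dsimp only; linear_combination q.2 * hdet

lemma one_div_sub_div_sq_sub_one_div_div_sq {μ : ℂ} (hμ : μ ≠ 0) (z w : ℂ) :
    1 / (z - w / μ) ^ 2 - 1 / (w / μ) ^ 2 = μ ^ 2 * (1 / (μ * z - w) ^ 2 - 1 / w ^ 2) := by
  rw [show z - w / μ = (μ * z - w) / μ by field_simp]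
  simp only [div_pow, one_div_div]
  ring

lemma im_linearFractional_pos {a b c d : ℤ} (hdet : a * d - b * c = 1) {τ : ℂ} (hτ : 0 < τ.im) :
    0 < ((a * τ + b) / (c * τ + d)).im := by
  let g : Matrix.SpecialLinearGroup (Fin 2) ℤ :=
    ⟨!![a, b; c, d], by simpa [Matrix.det_fin_two] using hdet⟩
  have h := (g • UpperHalfPlane.mk τ hτ).im_pos
  rw [← UpperHalfPlane.coe_im, UpperHalfPlane.coe_specialLinearGroup_apply] at h
  simpa [g] using h

lemma linearFractional_denom_ne_zero {a b c d : ℤ} (hdet : a * d - b * c = 1) {τ : ℂ}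
    (hτ : 0 < τ.im) : (c * τ + d : ℂ) ≠ 0 := fun h => by
  simpa [h] using im_linearFractional_pos hdet hτ

lemma wp_linearFractional {a b c d : ℤ} (hdet : a * d - b * c = 1) {τ : ℂ} (hτ : 0 < τ.im)
    (z : ℂ) : wp ((a * τ + b) / (c * τ + d)) z = (c * τ + d) ^ 2 * wp τ ((c * τ + d) * z) := by
  have hτ' := im_linearFractional_pos hdet hτ
  have hμ := linearFractional_denom_ne_zero hdet hτ
  set μ : ℂ := c * τ + d
  let e := prodEquivOfDetEqOne hdet
  have hω (p : ℤ × ℤ) : p.1 + p.2 * ((a * τ + b) / μ) = ((e p).1 + (e p).2 * τ) / μ := by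
    rw [eq_div_iff hμ, add_mul, mul_assoc, div_mul_cancel₀ _ hμ]
    simp only [e, prodEquivOfDetEqOne, Equiv.coe_fn_mk, μ]
    push_cast
    ring
  refine (hasSum_wp hτ'.ne' z).unique ?_
  refine (e.hasSum_iff.mpr ((hasSum_wp hτ.ne' (μ * z)).mul_left (μ ^ 2))).congr_fun fun p => ?_
  rw [Function.comp_apply, hω p, one_div_sub_div_sq_sub_one_div_div_sq hμ]

lemma wp_half_linearFractional_of_Gamma_two {a b c d : ℤ} (hdet : a * d - b * c = 1) (hao : Odd a)
    (hdo : Odd d) (hbe : Even b) (hce : Even c) {τ : ℂ} (hτ : 0 < τ.im) (p q : ℤ) :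
    wp ((a * τ + b) / (c * τ + d)) ((p + q * ((a * τ + b) / (c * τ + d))) / 2) =
      (c * τ + d) ^ 2 * wp τ ((p + q * τ) / 2) := by
  have hμ := linearFractional_denom_ne_zero hdet hτ
  have ha : a ≡ 1 [ZMOD 2] := Int.odd_iff.mp hao
  have hd : d ≡ 1 [ZMOD 2] := Int.odd_iff.mp hdo
  have hb : b ≡ 0 [ZMOD 2] := Int.even_iff.mp hbe
  have hc : c ≡ 0 [ZMOD 2] := Int.even_iff.mp hce
  have hz : (c * τ + d) * ((p + q * ((a * τ + b) / (c * τ + d))) / 2) =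
      (((d * p + b * q : ℤ) : ℂ) + ((c * p + a * q : ℤ) : ℂ) * τ) / 2 := by
    field_simp
    push_cast
    ring
  rw [wp_linearFractional hdet hτ, hz, wp_half_eq_of_modEq hτ.ne'
    (by simpa using (hd.mul_right p).add (hb.mul_right q))
    (by simpa using (hc.mul_right p).add (ha.mul_right q))]

/-- The modular lambda function `λ` is invariant under the principal
congruence subgroup `Γ(2)` of `SL₂(ℤ)`: for every matrix `(a b; c d) ∈ SL₂(ℤ)` with `a`
and `d` odd and `b` and `c` even, and every `τ` in the upper half-plane,
`λ((aτ + b)/(cτ + d)) = λ(τ)`. -/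
theorem mlambda_Gamma_two_invariant (a b c d : ℤ) (hdet : a * d - b * c = 1)
    (hao : Odd a) (hdo : Odd d) (hbe : Even b) (hce : Even c)
    (τ : ℂ) (hτ : 0 < τ.im) :
    mlambda (((a : ℂ) * τ + (b : ℂ)) / ((c : ℂ) * τ + (d : ℂ))) = mlambda τ := by
  have hμ := linearFractional_denom_ne_zero hdet hτ
  have h := wp_half_linearFractional_of_Gamma_two hdet hao hdo hbe hce hτ
  have h1 : e1 ((a * τ + b) / (c * τ + d)) = (c * τ + d) ^ 2 * e1 τ := by simpa [e1] using h 1 0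
  have h2 : e2 ((a * τ + b) / (c * τ + d)) = (c * τ + d) ^ 2 * e2 τ := by simpa [e2] using h 1 1
  have h3 : e3 ((a * τ + b) / (c * τ + d)) = (c * τ + d) ^ 2 * e3 τ := by simpa [e3] using h 0 1
  rw [mlambda, mlambda, h1, h2, h3, ← mul_sub, ← mul_sub, mul_div_mul_left _ _ (pow_ne_zero 2 hμ)]
end
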